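/- If the Lagrangian density L(X, φ, φ̇, F, G, g) depends on F and g only through the right Cauchy–Green tensor C = Fᵀ g F (i.e., C_{AB} = F^a{}_A g_{ab} F^b{}_B), then the Doyle–Ericksen-type identity 2 ∂L/∂g_{ab} = g^{bc} (∂L/∂F^c{}_A) F^a{}_A holds (for the part of L not depending on φ̇). -/

import Mathlib

/-!
Write `C = Fᵀ g F`, so that `L = L̂ ∘ C` and both sides are values of `D = dL̂(C)`. Since `C` is
linear in `g`, `∂L/∂g_{ab} = D[F_a ⊗ F_b]`, where `F_a` is the row `A ↦ F^a{}_A`. Since `C` is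
quadratic in `F`, `∂L/∂F` in a direction `M` is `D[Fᵀ g M + Mᵀ g F]`; contracting with
`g^{bc} F^a{}_A` amounts to taking `M = g^{b·} ⊗ F_a`, and `g g⁻¹ = 1` turns the two terms into
`F_b ⊗ F_a` and `F_a ⊗ F_b`. Because `D` is symmetric they contribute equally, whence the factor 2.
-/

open Finset

variable {ι κ : Type*} [Fintype ι]

/-- `pullbackForm g F₁ F₂ = F₁ᵀ g F₂`; the right Cauchy–Green tensor is `pullbackForm g F F`. -/
def pullbackForm (g : ι → ι → ℝ) (F₁ F₂ : ι → κ → ℝ) : κ → κ → ℝ :=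
  fun A B => ∑ a, ∑ b, F₁ a A * g a b * F₂ b B

theorem isBilinearMap_pullbackForm (g : ι → ι → ℝ) :
    IsBilinearMap ℝ (pullbackForm (κ := κ) g) := by
  constructor <;> intros <;> ext <;>
    simp [pullbackForm, add_mul, mul_add, sum_add_distrib, mul_sum, mul_assoc, mul_left_comm]

theorem isLinearMap_pullbackForm_metric (F₁ F₂ : ι → κ → ℝ) :
    IsLinearMap ℝ fun g : ι → ι → ℝ => pullbackForm g F₁ F₂ := by
  constructor <;> intros <;> ext <;>
    simp [pullbackForm, add_mul, mul_add, sum_add_distrib, mul_sum, mul_assoc, mul_left_comm]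

theorem pullbackForm_single [DecidableEq ι] (F₁ F₂ : ι → κ → ℝ) (a b : ι) :
    pullbackForm (Pi.single a (Pi.single b 1)) F₁ F₂ = fun A B => F₁ a A * F₂ b B := by
  ext A B
  simp [pullbackForm, Pi.single_apply, ite_apply]

theorem pullbackForm_rankOne_left (g : ι → ι → ℝ) (F : ι → κ → ℝ) (u : ι → ℝ) (v : κ → ℝ) :
    pullbackForm g (fun c A => u c * v A) F
      = fun A B => v A * ∑ b, (∑ c, u c * g c b) * F b B := by
  ext A B
  simp only [pullbackForm, sum_mul, mul_sum]
  rw [sum_comm]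
  exact sum_congr rfl fun _ _ => sum_congr rfl fun _ _ => by ring

theorem pullbackForm_rankOne_right (g : ι → ι → ℝ) (F : ι → κ → ℝ) (u : ι → ℝ) (v : κ → ℝ) :
    pullbackForm g F (fun c A => u c * v A)
      = fun A B => (∑ a, F a A * ∑ c, g a c * u c) * v B := by
  ext A B
  simp only [pullbackForm, sum_mul, mul_sum]
  exact sum_congr rfl fun _ _ => sum_congr rfl fun _ _ => by ring

theorem sum_mul_eq_ite_of_sum_mul_eq_ite [DecidableEq ι] {g h : ι → ι → ℝ}
    (hgh : ∀ i j, ∑ k, g i k * h k j = if i = j then 1 else 0) (i j : ι) :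
    ∑ k, h i k * g k j = if i = j then 1 else 0 := by
  have hmul : Matrix.of g * Matrix.of h = 1 :=
    Matrix.ext fun i j => by simpa [Matrix.mul_apply, Matrix.one_apply] using hgh i j
  have hmul' : Matrix.of h * Matrix.of g = 1 := mul_eq_one_comm.mp hmul
  simpa [Matrix.mul_apply, Matrix.one_apply] using Matrix.ext_iff.mpr hmul' i j

theorem sum_mul_sum_apply_single [DecidableEq ι] [Fintype κ] [DecidableEq κ] {Φ : Type*}
    [FunLike Φ (ι → κ → ℝ) ℝ] [LinearMapClass Φ ℝ (ι → κ → ℝ) ℝ]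
    (φ : Φ) (u : ι → ℝ) (v : κ → ℝ) :
    ∑ c, u c * ∑ A, φ (Pi.single c (Pi.single A 1)) * v A = φ (fun c A => u c * v A) := by
  have hexpand : (fun c A => u c * v A)
      = ∑ c, ∑ A, (u c * v A) • Pi.single c (Pi.single A (1 : ℝ)) := by
    ext c A
    simp [Finset.sum_apply, Pi.single_apply, ite_apply]
  simp only [hexpand, map_sum, map_smul, smul_eq_mul, mul_sum]
  exact sum_congr rfl fun _ _ => sum_congr rfl fun _ _ => by ring

section ChainRule

variable [Fintype κ] {L : (κ → κ → ℝ) → ℝ} {g : ι → ι → ℝ} {F : ι → κ → ℝ}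

theorem fderiv_comp_pullbackForm_metric (hL : DifferentiableAt ℝ L (pullbackForm g F F))
    (h : ι → ι → ℝ) :
    fderiv ℝ (fun g' => L (pullbackForm g' F F)) g h
      = fderiv ℝ L (pullbackForm g F F) (pullbackForm h F F) := by
  let P := (isLinearMap_pullbackForm_metric (ι := ι) F F).mk'.toContinuousLinearMap
  exact congrArg (· h) (HasFDerivAt.comp (g := L) g hL.hasFDerivAt P.hasFDerivAt).fderiv

theorem fderiv_comp_pullbackForm_self (hL : DifferentiableAt ℝ L (pullbackForm g F F))
    (E : ι → κ → ℝ) :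
    fderiv ℝ (fun F' => L (pullbackForm g F' F')) F E
      = fderiv ℝ L (pullbackForm g F F) (pullbackForm g F E + pullbackForm g E F) := by
  let B := (isBilinearMap_pullbackForm (κ := κ) g).toContinuousBilinearMap
  have hB : HasFDerivAt (fun F' => pullbackForm g F' F') _ F :=
    B.hasFDerivAt_of_bilinear (hasFDerivAt_id F) (hasFDerivAt_id F)
  exact congrArg (· E)
    (HasFDerivAt.comp (g := L) (f := fun F' => pullbackForm g F' F') F hL.hasFDerivAt hB).fderiv

end ChainRule

/-- If the Lagrangian density depends on `F` and `g` only through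
`C = Fᵀ g F` (i.e. `L(F,g) = L̂(C)` with `C_{AB} = F^a{}_A g_{ab} F^b{}_B`), then the
Doyle–Ericksen-type identity `2 ∂L/∂g_{ab} = g^{bc} (∂L/∂F^c{}_A) F^a{}_A` holds. -/
theorem stmt17 {n : ℕ}
    (Lhat : (Fin n → Fin n → ℝ) → ℝ) (hL : Differentiable ℝ Lhat)
    (F g ginv : Fin n → Fin n → ℝ)
    (hgsym : ∀ i j, g i j = g j i)
    (hginv : ∀ i j, (∑ k, g i k * ginv k j) = if i = j then (1 : ℝ) else 0)
    -- the derivative of L̂ at C = Fᵀ g F is a symmetric functional (C is symmetric)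
    (hsym : ∀ M : Fin n → Fin n → ℝ,
      fderiv ℝ Lhat (fun A B => ∑ a, ∑ b, F a A * g a b * F b B) M
        = fderiv ℝ Lhat (fun A B => ∑ a, ∑ b, F a A * g a b * F b B)
            (fun i j => M j i)) :
    ∀ a b : Fin n,
      2 * fderiv ℝ (fun g' => Lhat (fun A B => ∑ a', ∑ b', F a' A * g' a' b' * F b' B))
            g (Pi.single a (Pi.single b 1))
        = ∑ c, ginv b c * ∑ A,
            (fderiv ℝ (fun F' => Lhat (fun A' B' => ∑ a', ∑ b', F' a' A' * g a' b' * F' b' B'))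
              F (Pi.single c (Pi.single A 1))) * F a A := by
  intro a b
  have hinv := sum_mul_eq_ite_of_sum_mul_eq_ite hginv
  have hleft : pullbackForm g (fun c A => ginv b c * F a A) F = fun A B => F a A * F b B := by
    simp [pullbackForm_rankOne_left, hinv]
  have hrow : ∀ x, ∑ c, g x c * ginv b c = if b = x then 1 else 0 := fun x => by
    simpa [hgsym x, mul_comm] using hinv b x
  have hright : pullbackForm g F (fun c A => ginv b c * F a A) = fun A B => F a B * F b A := by
    rw [pullbackForm_rankOne_right]
    ext A B
    simp [hrow, mul_comm]
  have hD := hL (pullbackForm g F F)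
  replace hsym : ∀ M, fderiv ℝ Lhat (pullbackForm g F F) M
      = fderiv ℝ Lhat (pullbackForm g F F) (fun i j => M j i) := hsym
  change 2 * fderiv ℝ (fun g' => Lhat (pullbackForm g' F F)) g _
    = ∑ c, ginv b c * ∑ A, fderiv ℝ (fun F' => Lhat (pullbackForm g F' F')) F _ * F a A
  rw [sum_mul_sum_apply_single, fderiv_comp_pullbackForm_metric hD,
    fderiv_comp_pullbackForm_self hD, pullbackForm_single, hleft, hright, map_add,
    hsym (fun A B => F a B * F b A)]
  ring
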